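/- arXiv:0804.0144 — 2 statements merged into one kernel-verified Lean document; each statement's English description precedes it below -/
import Mathlib

section
/- Let m ≥ 5 be an integer with gcd(m,3) = 1. Then for every integer t with 0 ≤ t ≤ m−1 and every integer N ≥ 1, |F_{t/m}(N)| ≤ μ_m · N^{λ_m}. -/
/-!
Since `s (2n) = s n` and `s (2n+1) = s n + 1`, pairing consecutive terms gives
`F α (2M) = (1 - e(α)) F (2α) M` with `|1 - e(α)| = 2 |sin πα|`; unrolling along the binary
digits of `N` bounds `‖F α N‖` by `∑_{i ≤ log₂ N} ∏_{k < i} 2 |sin (π 2^k α)|`.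

For `σ = sin² x` one has `(sin² x · sin 2x)² = 4σ³(1 - σ) = 27/64 - (σ - 3/4)² (4σ² + 2σ + 3/4)`,
maximal at `σ = 3/4`. When `x = π u / m` with `m ∤ u` and `gcd(m, 3) = 1`, also `m ∤ 3u`, so
the triple-angle formula `|sin 3x| = |sin x| |3 - 4σ| ≥ sin (π / m)` keeps `σ` away from `3/4`
(while `b_m² = 3/4 - d²` with `|d| ≤ π / 3m`), which gives
`sin² x |sin 2x| ≤ b_m³`. The telescoping identity
`(∏_{k ≤ i} a_k)³ = a_0 a_i² ∏_{k < i} a_k² a_{k+1}` turns this into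
`∏_{k ≤ i} |sin (π 2^k t / m)| ≤ b_m^i`, and the resulting geometric sum is at most
`μ_m (2 b_m)^{⌊log₂ N⌋} ≤ μ_m N^{λ_m}`.
-/

open Finset Filter Topology

noncomputable section

/-- `s n` is the number of 1's in the binary expansion of `n`. -/
def s (n : ℕ) : ℕ := (Nat.digits 2 n).count 1

/-- `S m x = ∑_{0 ≤ n < x, m ∣ n} (-1)^(s n)`. -/
def S (m x : ℕ) : ℝ := ∑ n ∈ Finset.range x, if m ∣ n then (-1 : ℝ) ^ (s n) else 0

/-- `F α N = ∑_{n=0}^{N-1} e^{2πi(αn + s(n)/2)}`. -/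
def F (α : ℝ) (N : ℕ) : ℂ :=
  ∑ n ∈ Finset.range N, Complex.exp (2 * Real.pi * Complex.I * ((α : ℂ) * n + (s n : ℂ) / 2))

/-- `bsq m = b_m ^ 2`, defined by cases on `m mod 3`. -/
def bsq (m : ℕ) : ℝ :=
  if m % 3 = 0 then
    Real.sin (Real.pi / 3 * (1 + 3 / m)) * (Real.sqrt 3 - Real.sin (Real.pi / 3 * (1 + 3 / m)))
  else if m % 3 = 1 then
    Real.sin (Real.pi / 3 * (1 - 1 / m)) * (Real.sqrt 3 - Real.sin (Real.pi / 3 * (1 - 1 / m)))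
  else
    Real.sin (Real.pi / 3 * (1 + 1 / m)) * (Real.sqrt 3 - Real.sin (Real.pi / 3 * (1 + 1 / m)))

/-- `b m` is the positive real number with `(b m)^2 = bsq m`. -/
def b (m : ℕ) : ℝ := Real.sqrt (bsq m)

/-- `lam m = λ_m = 1 + log₂ b_m`. -/
def lam (m : ℕ) : ℝ := 1 + Real.logb 2 (b m)

/-- `mu m = μ_m = (2 b_m + 1)/(2 b_m - 1)`. -/
def mu (m : ℕ) : ℝ := (2 * b m + 1) / (2 * b m - 1)

/-- `U m x`: positive integers `≤ x` divisible by `m` and not by 3. -/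
def U (m x : ℕ) : Finset ℕ := (Finset.Icc 1 x).filter (fun n => m ∣ n ∧ ¬ (3 ∣ n))

/-- `V p n`: positive integers `≤ n` whose least prime divisor is `p`. -/
def V (p n : ℕ) : Finset ℕ := (Finset.Icc 1 n).filter (fun j => Nat.minFac j = p)

open Real

lemma s_two_mul (k : ℕ) : s (2 * k) = s k := by
  rcases Nat.eq_zero_or_pos k with rfl | hk
  · rfl
  · rw [s, Nat.digits_def' (by norm_num) (by omega)]
    simp [Nat.mul_div_cancel_left k (by norm_num : 0 < 2), s]

lemma s_two_mul_add_one (k : ℕ) : s (2 * k + 1) = s k + 1 := by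
  rw [s, Nat.digits_def' (by norm_num) (by omega), show (2 * k + 1) % 2 = 1 by omega,
    show (2 * k + 1) / 2 = k by omega, List.count_cons]
  simp [s]

lemma norm_F_succ_le (α : ℝ) (N : ℕ) : ‖F α (N + 1)‖ ≤ ‖F α N‖ + 1 := by
  simp only [F, sum_range_succ]
  refine (norm_add_le _ _).trans (le_of_eq ?_)
  rw [Complex.norm_exp]
  simp

lemma F_two_mul (α : ℝ) (M : ℕ) :
    F α (2 * M) = (1 - Complex.exp (2 * π * Complex.I * α)) * F (2 * α) M := by
  induction M with
  | zero => simp [F]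
  | succ M ih =>
    rw [show 2 * (M + 1) = 2 * M + 1 + 1 by ring]
    simp only [F] at ih ⊢
    rw [sum_range_succ, sum_range_succ, ih, sum_range_succ, s_two_mul_add_one, s_two_mul]
    have heven : 2 * π * Complex.I * (α * ↑(2 * M) + ↑(s M) / 2)
        = 2 * π * Complex.I * (↑(2 * α) * M + s M / 2) := by
      push_cast; ring
    have hodd : 2 * π * Complex.I * (α * ↑(2 * M + 1) + ↑(s M + 1) / 2)
        = 2 * π * Complex.I * (↑(2 * α) * M + s M / 2) + 2 * π * Complex.I * α
          + π * Complex.I := by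
      push_cast; ring
    rw [heven, hodd, Complex.exp_add, Complex.exp_add, Complex.exp_pi_mul_I]
    ring

lemma norm_one_sub_exp_two_pi_I_mul (x : ℝ) :
    ‖1 - Complex.exp (2 * π * Complex.I * x)‖ = 2 * |sin (π * x)| := by
  rw [norm_sub_rev, show 2 * (π : ℂ) * Complex.I * x = Complex.I * ((2 * π * x : ℝ) : ℂ) by
    push_cast; ring, Complex.norm_exp_I_mul_ofReal_sub_one, norm_mul, Real.norm_eq_abs,
    Real.norm_eq_abs, abs_two]
  ring_nf

lemma norm_F_two_mul (α : ℝ) (M : ℕ) :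
    ‖F α (2 * M)‖ = 2 * |sin (π * α)| * ‖F (2 * α) M‖ := by
  rw [F_two_mul, norm_mul, norm_one_sub_exp_two_pi_I_mul]

lemma norm_F_le_sum_prod (j : ℕ) : ∀ (α : ℝ) (N : ℕ), N < 2 ^ j →
    ‖F α N‖ ≤ ∑ i ∈ range j, ∏ k ∈ range i, 2 * |sin (π * (2 ^ k * α))| := by
  induction j with
  | zero =>
    intro α N hN
    obtain rfl : N = 0 := by simpa using hN
    simp [F]
  | succ j ih =>
    intro α N hN
    obtain ⟨M, hM⟩ := Nat.even_or_odd' N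
    have hMj : M < 2 ^ j := by rw [pow_succ] at hN; omega
    have hstep : ‖F α (2 * M)‖ + 1 ≤
        ∑ i ∈ range (j + 1), ∏ k ∈ range i, 2 * |sin (π * (2 ^ k * α))| := by
      rw [sum_range_succ', prod_range_zero, add_le_add_iff_right]
      calc ‖F α (2 * M)‖
          = 2 * |sin (π * α)| * ‖F (2 * α) M‖ := norm_F_two_mul α M
        _ ≤ 2 * |sin (π * α)| *
              ∑ i ∈ range j, ∏ k ∈ range i, 2 * |sin (π * (2 ^ k * (2 * α)))| := by
          gcongr; exact ih (2 * α) M hMj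
        _ = ∑ i ∈ range j, ∏ k ∈ range (i + 1), 2 * |sin (π * (2 ^ k * α))| := by
          rw [mul_sum]
          refine sum_congr rfl fun i _ => ?_
          rw [prod_range_succ', mul_comm]
          simp only [pow_succ, pow_zero, one_mul, mul_assoc]
    rcases hM with rfl | rfl
    · linarith
    · exact (norm_F_succ_le α _).trans hstep

lemma prod_range_succ_le_pow {a : ℕ → ℝ} {B : ℝ} (ha0 : ∀ k, 0 ≤ a k) (ha1 : ∀ k, a k ≤ 1)
    (hB : 0 ≤ B) (h : ∀ k, a k ^ 2 * a (k + 1) ≤ B ^ 3) (i : ℕ) :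
    ∏ k ∈ range (i + 1), a k ≤ B ^ i := by
  have hcube : ∀ i, (∏ k ∈ range (i + 1), a k) ^ 3
      = a 0 * a i ^ 2 * ∏ k ∈ range i, (a k ^ 2 * a (k + 1)) := by
    intro i
    induction i with
    | zero => rw [prod_range_one, prod_range_zero]; ring
    | succ i ih => rw [prod_range_succ, mul_pow, ih, prod_range_succ]; ring
  have hfac : ∀ k, 0 ≤ a k ^ 2 * a (k + 1) := fun k => mul_nonneg (sq_nonneg _) (ha0 _)
  have hprod : ∏ k ∈ range i, (a k ^ 2 * a (k + 1)) ≤ (B ^ i) ^ 3 := by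
    calc ∏ k ∈ range i, (a k ^ 2 * a (k + 1)) ≤ ∏ k ∈ range i, B ^ 3 :=
          prod_le_prod (fun k _ => hfac k) (fun k _ => h k)
      _ = (B ^ i) ^ 3 := by rw [prod_const, card_range, ← pow_mul, ← pow_mul, mul_comm]
  have hfront : a 0 * a i ^ 2 ≤ 1 := mul_le_one₀ (ha1 0) (sq_nonneg _) (pow_le_one₀ (ha0 i) (ha1 i))
  rw [← pow_le_pow_iff_left₀ (prod_nonneg fun k _ => ha0 k) (pow_nonneg hB i) three_ne_zero,
    hcube]
  calc a 0 * a i ^ 2 * ∏ k ∈ range i, (a k ^ 2 * a (k + 1))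
      ≤ 1 * (B ^ i) ^ 3 := mul_le_mul hfront hprod (prod_nonneg fun k _ => hfac k) zero_le_one
    _ = (B ^ i) ^ 3 := one_mul _

lemma one_add_two_mul_geom_sum_le {r : ℝ} (hr : 1 < r) (L : ℕ) :
    1 + 2 * ∑ i ∈ range L, r ^ i ≤ (r + 1) / (r - 1) * r ^ L := by
  have hr' : 0 < r - 1 := by linarith
  have hL : 1 ≤ r ^ L := one_le_pow₀ hr.le
  rw [geom_sum_eq hr.ne', div_mul_eq_mul_div, ← sub_nonneg]
  field_simp
  nlinarith

lemma two_mul_pow_eq_rpow_one_add_logb {B : ℝ} (hB : 0 < B) (L : ℕ) :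
    (2 * B) ^ L = ((2 : ℝ) ^ L) ^ (1 + logb 2 B) := by
  rw [← rpow_natCast_mul zero_le_two, mul_comm (L : ℝ), rpow_mul_natCast zero_le_two,
    rpow_add zero_lt_two, rpow_one, rpow_logb zero_lt_two (by norm_num) hB]

lemma norm_F_le_of_prod_abs_sin_le {α B : ℝ} (hB : 1 / 2 < B)
    (hprod : ∀ i, ∏ k ∈ range (i + 1), |sin (π * (2 ^ k * α))| ≤ B ^ i) (N : ℕ) :
    ‖F α N‖ ≤ (2 * B + 1) / (2 * B - 1) * (N : ℝ) ^ (1 + logb 2 B) := by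
  have hB0 : 0 < B := by linarith
  have hexp : 0 < 1 + logb 2 B := by
    have : logb 2 (1 / 2) < logb 2 B := logb_lt_logb one_lt_two (by norm_num) hB
    rw [one_div, logb_inv, logb_self_eq_one one_lt_two] at this
    linarith
  rcases Nat.eq_zero_or_pos N with rfl | hN
  · simp [F, zero_rpow hexp.ne']
  set L := Nat.log 2 N
  have hterm : ∀ i, ∏ k ∈ range (i + 1), 2 * |sin (π * (2 ^ k * α))| ≤ 2 * (2 * B) ^ i := by
    intro i
    rw [prod_mul_distrib, prod_const, card_range, pow_succ, mul_pow, mul_comm _ (2 : ℝ),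
      mul_assoc]
    gcongr
    exact hprod i
  have h2L : ((2 : ℝ) ^ L) ≤ N := by exact_mod_cast Nat.pow_log_le_self 2 hN.ne'
  calc ‖F α N‖ ≤ ∑ i ∈ range (L + 1), ∏ k ∈ range i, 2 * |sin (π * (2 ^ k * α))| :=
        norm_F_le_sum_prod _ α N (Nat.lt_pow_succ_log_self one_lt_two N)
    _ ≤ 1 + 2 * ∑ i ∈ range L, (2 * B) ^ i := by
        rw [sum_range_succ', prod_range_zero, add_comm, mul_sum]
        gcongr with i
        exact hterm i
    _ ≤ (2 * B + 1) / (2 * B - 1) * (2 * B) ^ L := one_add_two_mul_geom_sum_le (by linarith) L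
    _ ≤ (2 * B + 1) / (2 * B - 1) * (N : ℝ) ^ (1 + logb 2 B) := by
        rw [two_mul_pow_eq_rpow_one_add_logb hB0]
        have : 0 < 2 * B - 1 := by linarith
        gcongr

lemma sin_le_sin_of_le_of_le_pi_sub {x y : ℝ} (hx : 0 ≤ x) (hxy : x ≤ y) (hy : y ≤ π - x) :
    sin x ≤ sin y := by
  have hseg : y ∈ segment ℝ x (π - x) := by rw [segment_eq_Icc (hxy.trans hy)]; exact ⟨hxy, hy⟩
  have := strictConcaveOn_sin_Icc.concaveOn.ge_on_segment
    ⟨hx, by linarith⟩ ⟨by linarith, by linarith⟩ hseg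
  rwa [sin_pi_sub, min_self] at this

lemma sin_pi_div_le_abs_sin_pi_mul_div {m n : ℕ} (hn : ¬ m ∣ n) :
    sin (π / m) ≤ |sin (π * n / m)| := by
  rcases Nat.eq_zero_or_pos m with rfl | hm
  · simp
  have hm' : (0 : ℝ) < m := by exact_mod_cast hm
  have hr : 1 ≤ n % m := Nat.pos_of_ne_zero fun h => hn (Nat.dvd_of_mod_eq_zero h)
  have hrm : n % m + 1 ≤ m := Nat.mod_lt n hm
  have hr' : (1 : ℝ) ≤ (n % m : ℕ) := by exact_mod_cast hr
  have hrm' : ((n % m : ℕ) : ℝ) + 1 ≤ m := by exact_mod_cast hrm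
  have hsplit : π * n / m = π * (n % m : ℕ) / m + (n / m : ℕ) * π := by
    have : (n : ℝ) = m * (n / m : ℕ) + (n % m : ℕ) := by exact_mod_cast (Nat.div_add_mod n m).symm
    rw [this]
    field_simp
    ring
  rw [hsplit, sin_add_nat_mul_pi, abs_mul, abs_pow, abs_neg, abs_one, one_pow, one_mul]
  refine (sin_le_sin_of_le_of_le_pi_sub (by positivity) ?_ ?_).trans (le_abs_self _)
  · exact div_le_div_of_nonneg_right (le_mul_of_one_le_right pi_pos.le hr') hm'.le
  · rw [le_sub_iff_add_le, ← add_div, div_le_iff₀ hm']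
    nlinarith [pi_pos]

lemma abs_sin_sq_mul_abs_sin_two_mul_le {x p d : ℝ} (hp0 : 0 < p) (hp1 : p ≤ 1)
    (h3x : sin p ≤ |sin (3 * x)|) (hd : d ^ 2 ≤ p ^ 2 / 9) :
    |sin x| ^ 2 * |sin (2 * x)| ≤ √(3 / 4 - d ^ 2) ^ 3 := by
  set σ := sin x ^ 2
  have hσ0 : 0 ≤ σ := sq_nonneg _
  have hσ1 : σ ≤ 1 := sin_sq_le_one x
  have hsinp : 5 / 6 * p ≤ sin p := by nlinarith [sin_gt_sub_cube hp0]
  have htriple : 25 / 36 * p ^ 2 ≤ σ * (3 - 4 * σ) ^ 2 := by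
    calc 25 / 36 * p ^ 2 = (5 / 6 * p) ^ 2 := by ring
      _ ≤ |sin (3 * x)| ^ 2 := pow_le_pow_left₀ (by positivity) (hsinp.trans h3x) 2
      _ = σ * (3 - 4 * σ) ^ 2 := by rw [sq_abs, sin_three_mul]; ring
  have hdouble : sin (2 * x) ^ 2 = 4 * σ * (1 - σ) := by
    rw [sin_two_mul, mul_pow, cos_sq']; ring
  have hsq : (|sin x| ^ 2 * |sin (2 * x)|) ^ 2 ≤ (3 / 4 - d ^ 2) ^ 3 := by
    have hquad : 0 ≤ 4 * σ ^ 2 - 3 * σ + 3 / 4 := by nlinarith [sq_nonneg (σ - 3 / 8)]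
    calc (|sin x| ^ 2 * |sin (2 * x)|) ^ 2 = σ ^ 2 * (4 * σ * (1 - σ)) := by
          rw [mul_pow, sq_abs, sq_abs, hdouble]
      _ = 27 / 64 - (σ - 3 / 4) ^ 2 * (4 * σ ^ 2 + 2 * σ + 3 / 4) := by ring
      _ ≤ 27 / 64 - 5 / 16 * (σ * (3 - 4 * σ) ^ 2) := by
          nlinarith [mul_nonneg (sq_nonneg (σ - 3 / 4)) hquad]
      _ ≤ 27 / 64 - 27 / 16 * d ^ 2 := by nlinarith
      _ ≤ (3 / 4 - d ^ 2) ^ 3 := by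
          have : 0 ≤ 9 / 4 - d ^ 2 := by nlinarith
          nlinarith [mul_nonneg (sq_nonneg (d ^ 2)) this]
  have hroot : (√(3 / 4 - d ^ 2) ^ 3) ^ 2 = (3 / 4 - d ^ 2) ^ 3 := by
    rw [← pow_mul, mul_comm, pow_mul, sq_sqrt (by nlinarith)]
  exact (pow_le_pow_iff_left₀ (by positivity) (by positivity) two_ne_zero).mp (hroot ▸ hsq)

lemma sin_mul_sqrt_three_sub_sin (θ : ℝ) :
    sin θ * (√3 - sin θ) = 3 / 4 - (sin θ - sin (π / 3)) ^ 2 := by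
  rw [sin_pi_div_three]
  nlinarith [sq_sqrt (show (0 : ℝ) ≤ 3 by norm_num)]

lemma exists_bsq_eq {m : ℕ} (h3 : ¬ 3 ∣ m) :
    ∃ d : ℝ, bsq m = 3 / 4 - d ^ 2 ∧ d ^ 2 ≤ (π / m) ^ 2 / 9 := by
  obtain ⟨ε, hε, hbsq⟩ : ∃ ε : ℝ, |ε| = π / m / 3 ∧
      bsq m = sin (π / 3 + ε) * (√3 - sin (π / 3 + ε)) := by
    unfold bsq
    rw [if_neg (by omega)]
    split_ifs
    · exact ⟨-(π / m / 3), by rw [abs_neg, abs_of_nonneg (by positivity)], by ring_nf⟩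
    · exact ⟨π / m / 3, abs_of_nonneg (by positivity), by ring_nf⟩
  refine ⟨sin (π / 3 + ε) - sin (π / 3), by rw [hbsq, sin_mul_sqrt_three_sub_sin], ?_⟩
  calc (sin (π / 3 + ε) - sin (π / 3)) ^ 2 ≤ ε ^ 2 := by
        simpa using sq_le_sq.mpr (abs_sin_sub_sin_le (π / 3 + ε) (π / 3))
    _ = (π / m) ^ 2 / 9 := by rw [← sq_abs, hε]; ring

lemma one_half_lt_b {m : ℕ} (hm : 2 ≤ m) (h3 : ¬ 3 ∣ m) : 1 / 2 < b m := by
  obtain ⟨d, hbsq, hd⟩ := exists_bsq_eq h3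
  have hpm : π / m ≤ 2 := by
    rw [div_le_iff₀ (by positivity)]
    have : (2 : ℝ) ≤ m := by exact_mod_cast hm
    linarith [pi_le_four]
  have : 1 / 4 < bsq m := by nlinarith [div_nonneg pi_pos.le (Nat.cast_nonneg m)]
  rw [b, lt_sqrt (by norm_num)]
  linarith

lemma abs_sin_sq_mul_abs_sin_two_mul_le_b_pow_three {m : ℕ} (hm : 4 ≤ m) (hm3 : Nat.Coprime m 3)
    (u : ℕ) : |sin (π * u / m)| ^ 2 * |sin (2 * (π * u / m))| ≤ b m ^ 3 := by
  by_cases hu : m ∣ u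
  · obtain ⟨k, rfl⟩ := hu
    have hm0 : (m : ℝ) ≠ 0 := by positivity
    rw [show π * ((m * k : ℕ) : ℝ) / m = k * π by push_cast; field_simp, sin_nat_mul_pi]
    simp [b]
  have h3 : ¬ 3 ∣ m := (Nat.Prime.coprime_iff_not_dvd Nat.prime_three).mp hm3.symm
  obtain ⟨d, hbsq, hd⟩ := exists_bsq_eq h3
  have hp1 : π / m ≤ 1 := by
    rw [div_le_one (by positivity)]
    exact pi_le_four.trans (by exact_mod_cast hm)
  have h3u : sin (π / m) ≤ |sin (3 * (π * u / m))| := by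
    have := sin_pi_div_le_abs_sin_pi_mul_div (fun h => hu (hm3.dvd_of_dvd_mul_left h) : ¬ m ∣ 3 * u)
    rwa [show π * ((3 * u : ℕ) : ℝ) / m = 3 * (π * u / m) by push_cast; ring] at this
  rw [b, hbsq]
  exact abs_sin_sq_mul_abs_sin_two_mul_le (by positivity) hp1 h3u hd

theorem stmt_5_general (m : ℕ) (hm : 5 ≤ m) (hgcd : Nat.gcd m 3 = 1) (t : ℕ)
    (N : ℕ) :
    ‖F ((t : ℝ) / m) N‖ ≤ mu m * (N : ℝ) ^ lam m := by
  have h3 : ¬ 3 ∣ m := (Nat.Prime.coprime_iff_not_dvd Nat.prime_three).mp (Nat.Coprime.symm hgcd)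
  refine norm_F_le_of_prod_abs_sin_le (one_half_lt_b (by omega) h3) (fun i => ?_) N
  refine prod_range_succ_le_pow (B := b m) (fun _ => abs_nonneg _) (fun _ => abs_sin_le_one _)
    (sqrt_nonneg _) (fun k => ?_) i
  have := abs_sin_sq_mul_abs_sin_two_mul_le_b_pow_three (by omega) hgcd (2 ^ k * t)
  convert this using 4 <;> push_cast <;> ring_nf

theorem stmt_5 (m : ℕ) (hm : 5 ≤ m) (hgcd : Nat.gcd m 3 = 1) (t : ℕ) (ht : t ≤ m - 1)
    (N : ℕ) (hN : 1 ≤ N) :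
    ‖F ((t : ℝ) / m) N‖ ≤ mu m * (N : ℝ) ^ lam m :=
  stmt_5_general m hm hgcd t N
end
end

section
/- Let m ≥ 5 be an integer with gcd(m,3) = 1 and let l be an integer. If |sin(lπ/m)| > sin((π/m)·⌊m/3⌋), then |sin(lπ/m)| · |sin(2lπ/m)| ≤ b_m², where b_m² = max_{0 ≤ j ≤ m−1} |sin(jπ/m)|·(√3 − |sin(jπ/m)|). -/
open Finset Filter Topology

noncomputable section

/-! Write `|sin (lπ/m)| = sin (rπ/m)` with `0 ≤ 2r ≤ m`. The hypothesis forces `r > ⌊m/3⌋`, so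
`u = |sin (lπ/m)| ≥ sin θ` with `θ = (⌊m/3⌋ + 1)π/m ∈ [π/3, π/2]`. The product equals
`2u²√(1 - u²)`, which decreases once `u² ≥ 2/3`, so it is at most
`2 sin²θ cos θ ≤ sin θ (√3 - sin θ)`. If `m ≡ 2 (mod 3)`, `θ` is exactly the angle defining `b_m²`.
If `m ≡ 1 (mod 3)`, then `θ = π/3 + 2δ` while `b_m²` uses `π/3 - δ`, where `δ = π/(3m)`; as
`x (√3 - x)` is symmetric about `√3/2` and the two sines lie on either side of `√3/2` with sum at
least `√3`, the value at `sin (π/3 - δ)` is the larger one. -/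

open Real

lemma exists_abs_sin_eq_sin (m : ℕ) (hm : 0 < m) (l : ℤ) :
    ∃ r : ℕ, 2 * r ≤ m ∧ |sin (l * π / m)| = sin (r * π / m) := by
  have hm' : (0 : ℝ) < m := by exact_mod_cast hm
  set k := round ((l : ℝ) / m)
  set j := l - m * k
  have hj : 2 * |(j : ℝ)| ≤ m := by
    have hjm : (j : ℝ) = m * ((l : ℝ) / m - k) := by
      simp only [j]; push_cast; field_simp
    rw [hjm, abs_mul, abs_of_pos hm']
    nlinarith [abs_sub_round ((l : ℝ) / m)]
  refine ⟨j.natAbs, ?_, ?_⟩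
  · zify
    exact_mod_cast hj
  have hl : (l : ℝ) * π / m = j * π / m + k * π := by
    simp only [j]; push_cast; field_simp; ring
  have hπ : |(j : ℝ) * π / m| = |(j : ℝ)| * π / m := by
    rw [abs_div, abs_mul, abs_of_pos pi_pos, abs_of_pos hm']
  have hjπ : |(j : ℝ) * π / m| ≤ π := by
    rw [hπ, div_le_iff₀ hm']
    nlinarith [pi_pos]
  rw [hl, sin_add_int_mul_pi, abs_mul, abs_neg_one_zpow, one_mul,
    abs_sin_eq_sin_abs_of_abs_le_pi hjπ, hπ, Nat.cast_natAbs, Int.cast_abs]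

lemma nat_mul_pi_div_le_pi_div_two {r m : ℕ} (h : 2 * r ≤ m) : (r : ℝ) * π / m ≤ π / 2 := by
  rcases m.eq_zero_or_pos with rfl | hm
  · simp only [CharP.cast_eq_zero, div_zero]
    positivity
  rw [div_le_iff₀ (by exact_mod_cast hm)]
  have := mul_le_mul_of_nonneg_right (by exact_mod_cast h : 2 * (r : ℝ) ≤ m) pi_pos.le
  linarith

lemma sin_succ_mul_pi_div_le_abs_sin {m K : ℕ} (hK : 2 * K < m) {l : ℤ}
    (h : sin (K * π / m) < |sin (l * π / m)|) : sin ((K + 1) * π / m) ≤ |sin (l * π / m)| := by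
  obtain ⟨r, hr, hl⟩ := exists_abs_sin_eq_sin m (by omega) l
  rw [hl] at h ⊢
  have hr' := nat_mul_pi_div_le_pi_div_two hr
  have hKr : K + 1 ≤ r := by
    by_contra! hrK
    refine h.not_ge (sin_le_sin_of_le_of_le_pi_div_two ?_ (nat_mul_pi_div_le_pi_div_two hK.le) ?_)
    · linarith [pi_pos, (by positivity : 0 ≤ (r : ℝ) * π / m)]
    · gcongr
      exact_mod_cast Nat.lt_succ_iff.1 hrK
  refine sin_le_sin_of_le_of_le_pi_div_two ?_ hr' ?_
  · linarith [pi_pos, (by positivity : 0 ≤ ((K : ℝ) + 1) * π / m)]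
  · gcongr
    exact_mod_cast hKr

lemma sq_mul_one_sub_le_of_le {a b : ℝ} (ha : 2 / 3 ≤ a) (hab : a ≤ b) :
    b ^ 2 * (1 - b) ≤ a ^ 2 * (1 - a) := by
  nlinarith [mul_nonneg (sub_nonneg.2 hab) (by nlinarith : (0:ℝ) ≤ b ^ 2 + a * b + a ^ 2 - a - b)]

lemma abs_sin_mul_abs_sin_two_mul_le {x θ : ℝ} (h₁ : π / 3 ≤ θ) (h₂ : θ ≤ π / 2)
    (h : sin θ ≤ |sin x|) : |sin x| * |sin (2 * x)| ≤ 2 * sin θ ^ 2 * cos θ := by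
  have hθ : √3 / 2 ≤ sin θ :=
    sin_pi_div_three ▸ sin_le_sin_of_le_of_le_pi_div_two (by linarith [pi_pos]) h₂ h₁
  have hθ' : 3 / 4 ≤ sin θ ^ 2 := by
    nlinarith [sq_sqrt (show (0:ℝ) ≤ 3 by norm_num), sqrt_nonneg 3]
  have hsin : 0 ≤ sin θ := by linarith [sqrt_nonneg 3]
  have hcos : 0 ≤ cos θ := cos_nonneg_of_neg_pi_div_two_le_of_le (by linarith [pi_pos]) h₂
  have key := sq_mul_one_sub_le_of_le (a := sin θ ^ 2) (b := sin x ^ 2) (by linarith)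
    (by rw [← sq_abs (sin x)]; gcongr)
  rw [← pow_le_pow_iff_left₀ (by positivity) (by positivity) two_ne_zero]
  calc (|sin x| * |sin (2 * x)|) ^ 2 = 4 * ((sin x ^ 2) ^ 2 * (1 - sin x ^ 2)) := by
        rw [sin_two_mul, mul_pow, sq_abs, sq_abs, ← cos_sq']; ring
    _ ≤ 4 * ((sin θ ^ 2) ^ 2 * (1 - sin θ ^ 2)) := by gcongr
    _ = (2 * sin θ ^ 2 * cos θ) ^ 2 := by rw [← cos_sq']; ring

lemma sin_mul_one_add_two_cos_le_sqrt_three {θ : ℝ} (h₁ : π / 3 ≤ θ) (h₂ : θ ≤ π) :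
    sin θ * (1 + 2 * cos θ) ≤ √3 := by
  have hc : cos θ ≤ 1 / 2 :=
    cos_pi_div_three ▸ cos_le_cos_of_nonneg_of_le_pi (by positivity) h₂ h₁
  have hc' := neg_one_le_cos θ
  apply le_sqrt_of_sq_le
  -- `3 - (1 - c²)(1 + 2c)² = (1 - 2c)(1 + (1 + c)²(1 - 2c))`
  nlinarith [sin_sq_add_cos_sq θ, mul_nonneg (by linarith : (0:ℝ) ≤ 1 - 2 * cos θ)
    (mul_nonneg (sq_nonneg (1 + cos θ)) (by linarith : (0:ℝ) ≤ 1 - 2 * cos θ))]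

lemma two_mul_sin_sq_mul_cos_le {θ : ℝ} (h₁ : π / 3 ≤ θ) (h₂ : θ ≤ π) :
    2 * sin θ ^ 2 * cos θ ≤ sin θ * (√3 - sin θ) := by
  have hsin : 0 ≤ sin θ := sin_nonneg_of_nonneg_of_le_pi (by linarith [pi_pos]) h₂
  nlinarith [mul_le_mul_of_nonneg_left (sin_mul_one_add_two_cos_le_sqrt_three h₁ h₂) hsin]

lemma sqrt_three_le_sin_add_sin {δ : ℝ} (h₀ : 0 ≤ δ) (h : δ ≤ 3 / 20) :
    √3 ≤ sin (π / 3 + 2 * δ) + sin (π / 3 - δ) := by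
  have hc : 1 - δ ^ 2 / 2 ≤ cos δ := one_sub_sq_div_two_le_cos
  have hc₁ : cos δ ≤ 1 := cos_le_one δ
  have hs : δ - δ ^ 3 / 6 ≤ sin δ := sin_ge_sub_cube h₀
  have h3 : √3 ≤ 7 / 4 := by rw [sqrt_le_left (by norm_num)]; norm_num
  have hgain : (δ - δ ^ 3 / 6) * (1 - δ ^ 2) ≤ sin δ * (2 * cos δ - 1) :=
    mul_le_mul hs (by linarith) (by nlinarith) (by nlinarith)
  have hloss : √3 * (1 - cos δ) * (2 * cos δ + 3) ≤ 7 / 4 * (δ ^ 2 / 2) * 5 :=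
    mul_le_mul (mul_le_mul h3 (by linarith) (by linarith) (by norm_num)) (by linarith)
      (by nlinarith) (by positivity)
  -- the sum minus `√3` equals `sin δ (2 cos δ - 1) - √3 (1 - cos δ)(2 cos δ + 3)`
  rw [sin_add, sin_sub, sin_pi_div_three, cos_pi_div_three, sin_two_mul, cos_two_mul]
  nlinarith [mul_nonneg h₀ (sub_nonneg.2 h), mul_nonneg (mul_nonneg h₀ h₀) (sub_nonneg.2 h)]

lemma sin_mul_sqrt_three_sub_sin_le_bsq {m : ℕ} (hm : 5 ≤ m) (h3 : ¬ 3 ∣ m) :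
    sin ((↑(m / 3) + 1) * π / m) * (√3 - sin ((↑(m / 3) + 1) * π / m)) ≤ bsq m := by
  have hm' : (0 : ℝ) < m := by exact_mod_cast (show 0 < m by omega)
  rcases (show m % 3 = 1 ∨ m % 3 = 2 by omega) with h | h
  · have hmK : (m : ℝ) = 3 * ↑(m / 3) + 1 := by exact_mod_cast (show m = 3 * (m / 3) + 1 by omega)
    set δ := π / (3 * m)
    have hθ : (↑(m / 3) + 1) * π / m = π / 3 + 2 * δ := by
      simp only [δ]; rw [hmK]; field_simp; ring
    have hψ : π / 3 * (1 - 1 / m) = π / 3 - δ := by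
      simp only [δ]; field_simp
    have hδ : δ ≤ 3 / 20 := by
      simp only [δ]
      rw [div_le_iff₀ (by positivity)]
      have h7 : (7 : ℝ) ≤ m := by exact_mod_cast (show 7 ≤ m by omega)
      linarith [pi_lt_d2]
    have hsum := sqrt_three_le_sin_add_sin (by positivity) hδ
    have ht : sin (π / 3 - δ) ≤ √3 / 2 := by
      rw [← sin_pi_div_three]
      exact sin_le_sin_of_le_of_le_pi_div_two (by linarith [pi_gt_three]) (by linarith [pi_pos])
        (by linarith [(by positivity : 0 ≤ δ)])
    rw [bsq, if_neg (by omega), if_pos h, hθ, hψ]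
    nlinarith [mul_nonneg (sub_nonneg.2 hsum) (by linarith : 0 ≤ √3 - 2 * sin (π / 3 - δ))]
  · have hmK : (m : ℝ) = 3 * ↑(m / 3) + 2 := by exact_mod_cast (show m = 3 * (m / 3) + 2 by omega)
    have hθ : π / 3 * (1 + 1 / m) = (↑(m / 3) + 1) * π / m := by
      rw [hmK]; field_simp; ring
    rw [bsq, if_neg (by omega), if_neg (by omega), hθ]

theorem stmt_8 (m : ℕ) (hm : 5 ≤ m) (hgcd : Nat.gcd m 3 = 1) (l : ℤ)
    (hl : |Real.sin ((l : ℝ) * Real.pi / m)| > Real.sin (Real.pi / m * (⌊(m : ℝ) / 3⌋ : ℤ))) :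
    |Real.sin ((l : ℝ) * Real.pi / m)| * |Real.sin (2 * (l : ℝ) * Real.pi / m)| ≤ b m ^ 2 := by
  have h3 : ¬ 3 ∣ m := (Nat.Prime.coprime_iff_not_dvd Nat.prime_three).1 (Nat.coprime_comm.1 hgcd)
  have hm' : (0 : ℝ) < m := by exact_mod_cast (show 0 < m by omega)
  have hfloor : ⌊(m : ℝ) / 3⌋ = ((m / 3 : ℕ) : ℤ) := by
    simpa [Int.natCast_div] using Int.floor_div_natCast (m : ℝ) 3
  set θ := (↑(m / 3) + 1) * π / m
  have hθ₁ : π / 3 ≤ θ := by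
    have hK : (m : ℝ) ≤ 3 * (↑(m / 3) + 1) := by exact_mod_cast (show m ≤ 3 * (m / 3 + 1) by omega)
    rw [le_div_iff₀ hm']
    nlinarith [mul_le_mul_of_nonneg_left hK pi_pos.le]
  have hθ₂ : θ ≤ π / 2 := by
    simpa using nat_mul_pi_div_le_pi_div_two (r := m / 3 + 1) (m := m) (by omega)
  have hle : sin θ ≤ |sin (l * π / m)| := by
    refine sin_succ_mul_pi_div_le_abs_sin (by omega) ?_
    rwa [hfloor, Int.cast_natCast, div_mul_eq_mul_div, mul_comm π] at hl
  have hchain : |sin (l * π / m)| * |sin (2 * l * π / m)| ≤ bsq m := calc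
    _ = |sin (l * π / m)| * |sin (2 * (l * π / m))| := by ring_nf
    _ ≤ 2 * sin θ ^ 2 * cos θ := abs_sin_mul_abs_sin_two_mul_le hθ₁ hθ₂ hle
    _ ≤ sin θ * (√3 - sin θ) := two_mul_sin_sq_mul_cos_le hθ₁ (by linarith [pi_pos])
    _ ≤ bsq m := sin_mul_sqrt_three_sub_sin_le_bsq hm h3
  rwa [b, sq_sqrt ((mul_nonneg (abs_nonneg _) (abs_nonneg _)).trans hchain)]
end
end
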